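/- For every integer n ≥ 2 and every p ∈ ℤ^{3n−1} with a_n ≥ 0, b_n ≥ 0, c_n ≥ 0 and a_n + b_n − c_n ≥ 0, one has L(p) = (a_n! b_n!)/(c_n! (a_n + b_n − c_n)!) · L(χ(p)), where χ is the automorphism of ℤ^{3n−1} fixing all coordinates except that it exchanges a_n and c_n and replaces b_n by a_n + b_n − c_n. (The equality holds in [0,∞].) -/

import Mathlib

open MeasureTheory Finset
open scoped ENNReal

noncomputable section

/-- The unit cube `[0,1]^n`. -/
def cube (n : ℕ) : Set (Fin n → ℝ) := Set.univ.pi fun _ => Set.Icc (0:ℝ) 1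

/-- The `k`-th coordinate (1-based indexing) of `x`. -/
def ent {n : ℕ} (x : Fin n → ℝ) (k : ℕ) : ℝ := if h : k - 1 < n then x ⟨k - 1, h⟩ else 0

/-- `δ_k(x) = 1 - x_k δ_{k-1}(x)`, with `δ_0 = 1`. -/
def delta {n : ℕ} (x : Fin n → ℝ) : ℕ → ℝ
  | 0 => 1
  | k + 1 => 1 - ent x (k + 1) * delta x k

/-- The integral `L(p)` for `p = (a_1,…,a_n,b_1,…,b_n,c_2,…,c_n)`. -/
def Lint (n : ℕ) (a b c : ℕ → ℤ) : ℝ≥0∞ :=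
  ∫⁻ x in cube n, ENNReal.ofReal
    ((∏ k ∈ Icc 1 n, ent x k ^ a k * (1 - ent x k) ^ b k) /
      ((∏ k ∈ Icc 2 n, delta x k ^ c k) * delta x n))

/-!
Integrate out the last variable `y = xₙ`. With `t = δₙ₋₁(x) ∈ [0,1]` one has `δₙ = 1 - y t`, so
`L(p)` is the integral over the first `n - 1` variables of a weight not involving `aₙ, bₙ, cₙ`,
times the Euler integral `J(A,B,C;t) = ∫₀¹ y^A (1-y)^B (1 - y t)^(-C-1) dy`.
Expanding `(1 - y t)^(-C-1)` binomially and integrating term by term against the Beta integral gives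
`J(A,B,C;t) = ∑ₖ (k+C choose C) (A+k)! B! / (A+B+k+1)! tᵏ`. With `D = A + B - C`, the `k`-th
coefficient times `C! D!` is `(k+A)! (k+C)! B! D! / (k! (A+B+k+1)!)`, which is symmetric under
`(A,B,C,D) ↦ (C,D,A,B)`.
-/

open scoped Nat

theorem lintegral_pi_eq_lintegral_lintegral_snoc {α : Type*} [MeasurableSpace α] (μ : Measure α)
    [SigmaFinite μ] {m : ℕ} {f : (Fin (m + 1) → α) → ℝ≥0∞} (hf : Measurable f) :
    ∫⁻ x, f x ∂Measure.pi (fun _ => μ) =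
      ∫⁻ x, ∫⁻ y, f (Fin.snoc x y) ∂μ ∂Measure.pi (fun _ => μ) := by
  set e := MeasurableEquiv.piFinSuccAbove (fun _ => α) (Fin.last m)
  have he := (measurePreserving_piFinSuccAbove (fun _ => μ) (Fin.last m)).symm e
  rw [← he.lintegral_comp hf, lintegral_prod_symm' (fun p => f (e.symm p)) (hf.comp he.measurable)]
  congr! with x y
  simp [e, MeasurableEquiv.piFinSuccAbove, Fin.snocEquiv]

theorem volume_restrict_cube (n : ℕ) :
    (volume : Measure (Fin n → ℝ)).restrict (cube n) =
      Measure.pi fun _ => volume.restrict (Set.Icc 0 1) := by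
  refine (Measure.pi_eq fun s hs => ?_).symm
  rw [Measure.restrict_apply (MeasurableSet.univ_pi hs), cube, ← Set.pi_inter_distrib,
    volume_pi_pi]
  exact Finset.prod_congr rfl fun i _ => (Measure.restrict_apply (hs i)).symm

theorem measurableSet_cube (n : ℕ) : MeasurableSet (cube n) :=
  .univ_pi fun _ => measurableSet_Icc

theorem setLIntegral_cube_succ {m : ℕ} {f : (Fin (m + 1) → ℝ) → ℝ≥0∞} (hf : Measurable f) :
    ∫⁻ x in cube (m + 1), f x =
      ∫⁻ x in cube m, ∫⁻ y in Set.Icc 0 1, f (Fin.snoc x y) := by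
  rw [volume_restrict_cube, volume_restrict_cube, lintegral_pi_eq_lintegral_lintegral_snoc _ hf]

theorem measurable_ent {n : ℕ} (k : ℕ) : Measurable fun x : Fin n → ℝ => ent x k := by
  unfold ent
  split
  · exact measurable_pi_apply _
  · exact measurable_const

theorem measurable_delta {n : ℕ} (k : ℕ) : Measurable fun x : Fin n → ℝ => delta x k := by
  induction k with
  | zero => exact measurable_const
  | succ k ih => exact measurable_const.sub ((measurable_ent (k + 1)).mul ih)

theorem ent_mem_Icc {n : ℕ} {x : Fin n → ℝ} (hx : x ∈ cube n) (k : ℕ) :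
    ent x k ∈ Set.Icc (0 : ℝ) 1 := by
  unfold ent
  split
  · exact hx _ trivial
  · exact ⟨le_rfl, zero_le_one⟩

theorem delta_mem_Icc {n : ℕ} {x : Fin n → ℝ} (hx : x ∈ cube n) (k : ℕ) :
    delta x k ∈ Set.Icc (0 : ℝ) 1 := by
  induction k with
  | zero => exact ⟨zero_le_one, le_rfl⟩
  | succ k ih =>
    obtain ⟨he0, he1⟩ := ent_mem_Icc hx (k + 1)
    obtain ⟨hd0, hd1⟩ := ih
    exact ⟨by simp only [delta]; nlinarith, by simp only [delta]; nlinarith⟩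

-- `ent x 0` is the junk value `x 0`, because `0 - 1 = 0` in `ℕ`.
theorem ent_snoc {m : ℕ} (x : Fin m → ℝ) (y : ℝ) {k : ℕ} (hk1 : 1 ≤ k) (hk : k ≤ m) :
    ent (Fin.snoc x y : Fin (m + 1) → ℝ) k = ent x k := by
  have h : k - 1 < m := by omega
  rw [ent, ent, dif_pos (by omega), dif_pos h]
  exact Fin.snoc_castSucc (α := fun _ => ℝ) (i := ⟨k - 1, h⟩) ..

theorem ent_snoc_self {m : ℕ} (x : Fin m → ℝ) (y : ℝ) :
    ent (Fin.snoc x y : Fin (m + 1) → ℝ) (m + 1) = y := by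
  rw [ent, dif_pos (by omega)]
  exact Fin.snoc_last (α := fun _ => ℝ) ..

theorem delta_snoc {m : ℕ} (x : Fin m → ℝ) (y : ℝ) {k : ℕ} (hk : k ≤ m) :
    delta (Fin.snoc x y : Fin (m + 1) → ℝ) k = delta x k := by
  induction k with
  | zero => rfl
  | succ k ih => rw [delta, delta, ent_snoc x y (by omega) hk, ih (by omega)]

theorem delta_snoc_self {m : ℕ} (x : Fin m → ℝ) (y : ℝ) :
    delta (Fin.snoc x y : Fin (m + 1) → ℝ) (m + 1) = 1 - y * delta x m := by
  rw [delta, ent_snoc_self, delta_snoc x y le_rfl]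

theorem integral_pow_mul_one_sub_pow (p q : ℕ) :
    ∫ y in (0 : ℝ)..1, y ^ p * (1 - y) ^ q = p ! * q ! / (p + q + 1)! := by
  have hre : ∀ r : ℕ, 0 < ((r : ℂ) + 1).re := fun r => by
    simp only [Complex.add_re, Complex.natCast_re, Complex.one_re]; positivity
  have hbeta := Complex.betaIntegral_eq_Gamma_mul_div _ _ (hre p) (hre q)
  have hsum : ((p : ℂ) + 1) + ((q : ℂ) + 1) = ((p + q + 1 : ℕ) : ℂ) + 1 := by push_cast; ring
  rw [hsum, Complex.Gamma_nat_eq_factorial, Complex.Gamma_nat_eq_factorial,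
    Complex.Gamma_nat_eq_factorial, Complex.betaIntegral] at hbeta
  rw [← Complex.ofReal_inj, ← intervalIntegral.integral_ofReal]
  push_cast
  rw [← hbeta]
  refine intervalIntegral.integral_congr fun y _ => ?_
  simp only [add_sub_cancel_right, Complex.cpow_natCast]

theorem setLIntegral_Icc_pow_mul_one_sub_pow (p q : ℕ) :
    ∫⁻ y in Set.Icc (0 : ℝ) 1, ENNReal.ofReal (y ^ p * (1 - y) ^ q) =
      ENNReal.ofReal (p ! * q ! / (p + q + 1)!) := by
  rw [← integral_pow_mul_one_sub_pow, intervalIntegral.integral_of_le zero_le_one,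
    ← Measure.restrict_congr_set Ioc_ae_eq_Icc, ← ofReal_integral_eq_lintegral_ofReal]
  · exact (by fun_prop : Continuous fun y : ℝ => y ^ p * (1 - y) ^ q).integrableOn_Ioc
  · filter_upwards [ae_restrict_mem measurableSet_Ioc] with y hy
    exact mul_nonneg (pow_nonneg hy.1.le _) (pow_nonneg (by linarith [hy.2]) _)

def eulerIntegral (A B C : ℕ) (t : ℝ) : ℝ≥0∞ :=
  ∫⁻ y in Set.Icc (0 : ℝ) 1, ENNReal.ofReal (y ^ A * (1 - y) ^ B / (1 - y * t) ^ (C + 1))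

def eulerCoeff (A B C k : ℕ) : ℝ := (k + C).choose C * ((A + k)! * B ! / (A + k + B + 1)!)

theorem hasSum_pow_mul_one_sub_pow_div {A B C : ℕ} {t y : ℝ} (ht : t ∈ Set.Icc (0 : ℝ) 1)
    (hy : y ∈ Set.Ico (0 : ℝ) 1) :
    HasSum (fun k : ℕ => (k + C).choose C * t ^ k * (y ^ (A + k) * (1 - y) ^ B))
      (y ^ A * (1 - y) ^ B / (1 - y * t) ^ (C + 1)) := by
  have hyt : ‖y * t‖ < 1 := by
    rw [Real.norm_eq_abs, abs_of_nonneg (mul_nonneg hy.1 ht.1)]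
    nlinarith [hy.2, ht.2, hy.1]
  have h := (hasSum_choose_mul_geometric_of_norm_lt_one C hyt).mul_left (y ^ A * (1 - y) ^ B)
  rw [mul_one_div] at h
  convert h using 1
  · rfl
  · ext k
    rw [mul_pow, pow_add]
    ring

theorem eulerIntegral_eq_tsum (A B C : ℕ) {t : ℝ} (ht : t ∈ Set.Icc (0 : ℝ) 1) :
    eulerIntegral A B C t = ∑' k, ENNReal.ofReal (eulerCoeff A B C k * t ^ k) := by
  have hterm_nonneg : ∀ k : ℕ, 0 ≤ ((k + C).choose C : ℝ) * t ^ k := fun k => by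
    have := ht.1; positivity
  have hseries : ∀ y ∈ Set.Ico (0 : ℝ) 1,
      ENNReal.ofReal (y ^ A * (1 - y) ^ B / (1 - y * t) ^ (C + 1)) =
        ∑' k : ℕ, ENNReal.ofReal ((k + C).choose C * t ^ k) *
          ENNReal.ofReal (y ^ (A + k) * (1 - y) ^ B) := by
    intro y hy
    have hsum := hasSum_pow_mul_one_sub_pow_div (A := A) (B := B) (C := C) ht hy
    have hy' : 0 ≤ 1 - y := by linarith [hy.2]
    rw [← hsum.tsum_eq, ENNReal.ofReal_tsum_of_nonneg
      (fun k => mul_nonneg (hterm_nonneg k) (mul_nonneg (pow_nonneg hy.1 _) (pow_nonneg hy' _)))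
      hsum.summable]
    simp only [ENNReal.ofReal_mul (hterm_nonneg _)]
  rw [eulerIntegral, ← Measure.restrict_congr_set Ico_ae_eq_Icc,
    setLIntegral_congr_fun measurableSet_Ico hseries,
    lintegral_tsum fun k => by fun_prop]
  refine tsum_congr fun k => ?_
  rw [lintegral_const_mul' _ _ ENNReal.ofReal_ne_top, Measure.restrict_congr_set Ico_ae_eq_Icc,
    setLIntegral_Icc_pow_mul_one_sub_pow, ← ENNReal.ofReal_mul (hterm_nonneg k), eulerCoeff]
  congr 1
  ring

theorem add_choose_mul_factorial_mul_factorial_comm (A C k : ℕ) :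
    (k + C).choose C * (A + k)! * C ! = (k + A).choose A * (C + k)! * A ! := by
  refine Nat.eq_of_mul_eq_mul_right k.factorial_pos ?_
  calc (k + C).choose C * (A + k)! * C ! * k !
      = (k + C).choose C * k ! * C ! * (k + A)! := by rw [add_comm A k]; ring
    _ = (k + A).choose A * k ! * A ! * (k + C)! := by
      rw [Nat.add_choose_mul_factorial_mul_factorial, Nat.add_choose_mul_factorial_mul_factorial,
        mul_comm]
    _ = (k + A).choose A * (C + k)! * A ! * k ! := by rw [add_comm C k]; ring

theorem eulerCoeff_swap {A B C D : ℕ} (hS : A + B = C + D) (k : ℕ) :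
    eulerCoeff A B C k = A ! * B ! / (C ! * D !) * eulerCoeff C D A k := by
  have key : ((k + C).choose C * (A + k)! * C ! : ℝ) = (k + A).choose A * (C + k)! * A ! := by
    exact_mod_cast add_choose_mul_factorial_mul_factorial_comm A C k
  rw [eulerCoeff, eulerCoeff, show C + k + D + 1 = A + k + B + 1 by omega]
  field_simp
  linear_combination key

theorem eulerIntegral_swap {A B C D : ℕ} (hS : A + B = C + D) {t : ℝ}
    (ht : t ∈ Set.Icc (0 : ℝ) 1) :
    eulerIntegral A B C t =
      ENNReal.ofReal (A ! * B ! / (C ! * D !)) * eulerIntegral C D A t := by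
  rw [eulerIntegral_eq_tsum A B C ht, eulerIntegral_eq_tsum C D A ht, ← ENNReal.tsum_mul_left]
  refine tsum_congr fun k => ?_
  rw [eulerCoeff_swap hS, mul_assoc, ENNReal.ofReal_mul (by positivity)]

def weight (m : ℕ) (a b c : ℕ → ℤ) (x : Fin m → ℝ) : ℝ :=
  (∏ k ∈ Icc 1 m, ent x k ^ a k * (1 - ent x k) ^ b k) / ∏ k ∈ Icc 2 m, delta x k ^ c k

theorem Lint_eq (n : ℕ) (a b c : ℕ → ℤ) :
    Lint n a b c = ∫⁻ x in cube n, ENNReal.ofReal (weight n a b c x / delta x n) := by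
  simp only [Lint, weight, div_div]

theorem measurable_weight (m : ℕ) (a b c : ℕ → ℤ) : Measurable (weight m a b c) :=
  (Finset.measurable_prod _ fun k _ => ((measurable_ent k).pow_const _).mul
      ((measurable_const.sub (measurable_ent k)).pow_const _)).div
    (Finset.measurable_prod _ fun k _ => (measurable_delta k).pow_const _)

theorem weight_nonneg {m : ℕ} (a b c : ℕ → ℤ) {x : Fin m → ℝ} (hx : x ∈ cube m) :
    0 ≤ weight m a b c x :=
  div_nonneg
    (prod_nonneg fun k _ => mul_nonneg (zpow_nonneg (ent_mem_Icc hx k).1 _)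
      (zpow_nonneg (sub_nonneg.2 (ent_mem_Icc hx k).2) _))
    (prod_nonneg fun k _ => zpow_nonneg (delta_mem_Icc hx k).1 _)

theorem weight_congr {m : ℕ} {a b c a' b' c' : ℕ → ℤ} (ha : ∀ k ≤ m, a' k = a k)
    (hb : ∀ k ≤ m, b' k = b k) (hc : ∀ k ≤ m, c' k = c k) (x : Fin m → ℝ) :
    weight m a' b' c' x = weight m a b c x := by
  unfold weight
  congr 1
  · refine prod_congr rfl fun k hk => ?_
    rw [ha k (mem_Icc.1 hk).2, hb k (mem_Icc.1 hk).2]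
  · refine prod_congr rfl fun k hk => ?_
    rw [hc k (mem_Icc.1 hk).2]

theorem weight_snoc {m : ℕ} (hm : 1 ≤ m) (a b c : ℕ → ℤ) (x : Fin m → ℝ) (y : ℝ) :
    weight (m + 1) a b c (Fin.snoc x y) =
      weight m a b c x *
        (y ^ a (m + 1) * (1 - y) ^ b (m + 1) / (1 - y * delta x m) ^ c (m + 1)) := by
  set z : Fin (m + 1) → ℝ := Fin.snoc x y
  have hent : ∏ k ∈ Icc 1 m, ent z k ^ a k * (1 - ent z k) ^ b k =
      ∏ k ∈ Icc 1 m, ent x k ^ a k * (1 - ent x k) ^ b k :=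
    prod_congr rfl fun k hk => by rw [ent_snoc x y (mem_Icc.1 hk).1 (mem_Icc.1 hk).2]
  have hdelta : ∏ k ∈ Icc 2 m, delta z k ^ c k = ∏ k ∈ Icc 2 m, delta x k ^ c k :=
    prod_congr rfl fun k hk => by rw [delta_snoc x y (mem_Icc.1 hk).2]
  rw [weight, weight, prod_Icc_succ_top (by omega), prod_Icc_succ_top (by omega), hent, hdelta,
    ent_snoc_self, delta_snoc_self, mul_div_mul_comm]

theorem Lint_succ {m : ℕ} (hm : 1 ≤ m) (a b c : ℕ → ℤ) {A B C : ℕ} (hA : a (m + 1) = A)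
    (hB : b (m + 1) = B) (hC : c (m + 1) = C) :
    Lint (m + 1) a b c =
      ∫⁻ x in cube m, ENNReal.ofReal (weight m a b c x) * eulerIntegral A B C (delta x m) := by
  rw [Lint_eq,
    setLIntegral_cube_succ
      (by exact ((measurable_weight (m + 1) a b c).div (measurable_delta (m + 1))).ennreal_ofReal)]
  refine setLIntegral_congr_fun (measurableSet_cube m) fun x hx => ?_
  rw [eulerIntegral, ← lintegral_const_mul' _ _ ENNReal.ofReal_ne_top]
  refine lintegral_congr fun y => ?_
  rw [← ENNReal.ofReal_mul (weight_nonneg a b c hx), weight_snoc hm, delta_snoc_self, hA, hB, hC,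
    zpow_natCast, zpow_natCast, zpow_natCast, pow_succ, mul_div_assoc, div_div]

theorem stmt11 (n : ℕ) (hn : 2 ≤ n) (a b c : ℕ → ℤ)
    (ha : 0 ≤ a n) (hb : 0 ≤ b n) (hc : 0 ≤ c n) (habc : 0 ≤ a n + b n - c n) :
    Lint n a b c =
      ENNReal.ofReal
        ((Nat.factorial (a n).toNat * Nat.factorial (b n).toNat : ℝ) /
          (Nat.factorial (c n).toNat * Nat.factorial ((a n + b n - c n).toNat))) *
      Lint n (fun k => if k = n then c n else a k)
        (fun k => if k = n then a n + b n - c n else b k)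
        (fun k => if k = n then a n else c k) := by
  obtain ⟨m, rfl⟩ : ∃ m, n = m + 1 := ⟨n - 1, by omega⟩
  have hm : 1 ≤ m := by omega
  have below : ∀ {u : ℤ} {v : ℕ → ℤ}, ∀ k ≤ m, (if k = m + 1 then u else v k) = v k :=
    fun k hk => if_neg (by omega)
  obtain ⟨A, hA⟩ := Int.eq_ofNat_of_zero_le ha
  obtain ⟨B, hB⟩ := Int.eq_ofNat_of_zero_le hb
  obtain ⟨C, hC⟩ := Int.eq_ofNat_of_zero_le hc
  obtain ⟨D, hD⟩ := Int.eq_ofNat_of_zero_le habc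
  have hS : A + B = C + D := by omega
  rw [Lint_succ hm a b c hA hB hC,
    Lint_succ hm _ _ _ (A := C) (B := D) (C := A) (by simp [hC]) (by simp [hD]) (by simp [hA]),
    hD, hA, hB, hC, Int.toNat_natCast, Int.toNat_natCast, Int.toNat_natCast, Int.toNat_natCast,
    ← lintegral_const_mul' _ _ ENNReal.ofReal_ne_top]
  refine setLIntegral_congr_fun (measurableSet_cube m) fun x hx => ?_
  rw [weight_congr below below below, eulerIntegral_swap hS (delta_mem_Icc hx m)]
  ring

end
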